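/- Fix ψ > 0 and a, b, c > 0 with a + b + c = 1, and let (φ, ρ) ∈ 𝒟 be the critical point of f + h (with f, h, 𝒟 as above). Then ρ = σ(z) and φ = ν(z), where z = ψ/φ satisfies ζ(z) = ψ; here σ(z) = (√(z²+z+1)−1)/z, ν(z) = ζ(z)/z, and ζ is as in the definition of the arctic curve. -/

import Mathlib

open Real

/-- The entropy-type function `h(x,y)` on the domain `𝒟`. -/
noncomputable def hFn (a b c x y : ℝ) : ℝ :=
  (2 - y) * Real.log (2 - y) - (1 - y) * Real.log (1 - y) + (1 + y) * Real.log (1 + y) -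
    y * Real.log y + (c + x - y) * Real.log (c + x - y) - c * Real.log c -
    (x - y) * Real.log (x - y) + (a + b + y - x) * Real.log (a + b + y - x) -
    a * Real.log a - (b + y - x) * Real.log (b + y - x)

/-- The function `f(x) = (ψ+x)log(ψ+x) − ψ log ψ − x log x`. -/
noncomputable def fFn (ψ x : ℝ) : ℝ :=
  (ψ + x) * Real.log (ψ + x) - ψ * Real.log ψ - x * Real.log x

/-- `g = f + h`. -/
noncomputable def gFn (a b c ψ x y : ℝ) : ℝ := fFn ψ x + hFn a b c x y

/-- Membership in the domain `𝒟 = {(x,y) : 0 < x, 0 < y, x < 1+b, x−b < y < min(x,1)}`. -/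
def memD (b x y : ℝ) : Prop :=
  0 < x ∧ 0 < y ∧ x < 1 + b ∧ x - b < y ∧ y < x ∧ y < 1

/-- The Hessian matrix of `g = f + h` at `(x, y)`, with entries given by iterated `deriv`s. -/
noncomputable def hessG (a b c ψ x y : ℝ) : Matrix (Fin 2) (Fin 2) ℝ :=
  !![deriv (fun t => deriv (fun s => gFn a b c ψ s y) t) x,
     deriv (fun t => deriv (fun s => gFn a b c ψ s t) x) y;
     deriv (fun t => deriv (fun s => gFn a b c ψ t s) y) x,
     deriv (fun t => deriv (fun s => gFn a b c ψ x s) t) y]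

/-- The function `ζ(z)` from the arctic-curve parametrization. -/
noncomputable def zeta (a b c z : ℝ) : ℝ :=
  Real.sqrt (z ^ 2 + z + 1) + Real.sqrt ((z * b + z * c + a + c) ^ 2 - 4 * a * b * z) / 2 +
    ((b - c) * z - a - c) / 2 - 1

/-- `σ(z) = (√(z²+z+1) − 1)/z`. -/
noncomputable def sigmaFn (z : ℝ) : ℝ := (Real.sqrt (z ^ 2 + z + 1) - 1) / z

/-- `ν(z) = ζ(z)/z`. -/
noncomputable def nuFn (a b c z : ℝ) : ℝ := zeta a b c z / z

/-!
Both partial derivatives of `f + h` are signed sums of logarithms of the linear factors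
`ψ + x, x, 2 - y, 1 ± y, y, c + x - y, x - y, a + b + y - x, b + y - x`, so at a critical point
two products of these factors agree, one for each direction. With `z = ψ / φ`, a combination of
the two equations eliminates everything but `ρ` and leaves `zρ² + 2ρ - 1 - z = 0`, i.e.
`√(z² + z + 1) = zρ + 1`; the first equation alone is a quadratic in the gap `u = φ - ρ`, and
since `u > 0` is its positive root, the square root in `ζ` equals `2zu - ((b - c)z - a - c)`.
Substituting both gives `ζ(z) = zρ + zu = zφ = ψ`.
-/

theorem HasDerivAt.mul_log {f : ℝ → ℝ} {f' x : ℝ} (hf : HasDerivAt f f' x) (hx : f x ≠ 0) :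
    HasDerivAt (fun t => f t * Real.log (f t)) (f' * (Real.log (f x) + 1)) x := by
  simpa [Function.comp_def, mul_comm] using (Real.hasDerivAt_mul_log hx).comp x hf

section Derivatives

variable {a b c ψ x y : ℝ}

theorem hasDerivAt_fFn (hψx : ψ + x ≠ 0) (hx : x ≠ 0) :
    HasDerivAt (fFn ψ) (log (ψ + x) - log x) x := by
  have hψ := ((hasDerivAt_id' x).const_add ψ).mul_log hψx
  have hx := (hasDerivAt_id' x).mul_log hx
  exact ((hψ.sub_const (ψ * log ψ)).sub hx).congr_deriv (by ring)

theorem hasDerivAt_hFn_fst (h₁ : c + x - y ≠ 0) (h₂ : x - y ≠ 0) (h₃ : a + b + y - x ≠ 0)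
    (h₄ : b + y - x ≠ 0) :
    HasDerivAt (fun t => hFn a b c t y)
      (log (c + x - y) - log (x - y) - log (a + b + y - x) + log (b + y - x)) x := by
  have d₁ := (((hasDerivAt_id' x).const_add c).sub_const y).mul_log h₁
  have d₂ := ((hasDerivAt_id' x).sub_const y).mul_log h₂
  have d₃ := ((hasDerivAt_id' x).const_sub (a + b + y)).mul_log h₃
  have d₄ := ((hasDerivAt_id' x).const_sub (b + y)).mul_log h₄
  refine (((((d₁.sub d₂).add d₃).sub d₄).add_const ((2 - y) * log (2 - y) -
    (1 - y) * log (1 - y) + (1 + y) * log (1 + y) - y * log y - c * log c - a * log a)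
    ).congr_of_eventuallyEq (.of_forall fun t => ?_)).congr_deriv ?_
  · simp only [hFn, Pi.add_apply, Pi.sub_apply]
    ring
  · ring

theorem hasDerivAt_hFn_snd (h₁ : 2 - y ≠ 0) (h₂ : 1 - y ≠ 0) (h₃ : 1 + y ≠ 0) (h₄ : y ≠ 0)
    (h₅ : c + x - y ≠ 0) (h₆ : x - y ≠ 0) (h₇ : a + b + y - x ≠ 0) (h₈ : b + y - x ≠ 0) :
    HasDerivAt (fun t => hFn a b c x t)
      (log (1 - y) + log (1 + y) - log (2 - y) - log y - log (c + x - y) + log (x - y) +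
        log (a + b + y - x) - log (b + y - x)) y := by
  have d₁ := ((hasDerivAt_id' y).const_sub 2).mul_log h₁
  have d₂ := ((hasDerivAt_id' y).const_sub 1).mul_log h₂
  have d₃ := ((hasDerivAt_id' y).const_add 1).mul_log h₃
  have d₄ := (hasDerivAt_id' y).mul_log h₄
  have d₅ := ((hasDerivAt_id' y).const_sub (c + x)).mul_log h₅
  have d₆ := ((hasDerivAt_id' y).const_sub x).mul_log h₆
  have d₇ := (((hasDerivAt_id' y).const_add (a + b)).sub_const x).mul_log h₇
  have d₈ := (((hasDerivAt_id' y).const_add b).sub_const x).mul_log h₈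
  refine (((((((((d₁.sub d₂).add d₃).sub d₄).add d₅).sub d₆).add d₇).sub d₈).sub_const
    (c * log c + a * log a)).congr_of_eventuallyEq (.of_forall fun t => ?_)).congr_deriv ?_
  · simp only [hFn, Pi.add_apply, Pi.sub_apply]
    ring
  · ring

end Derivatives

section CriticalPoint

variable {a b c ψ x y : ℝ}

theorem memD.mul_eq_mul_of_deriv_fst_eq_zero (ha : 0 < a) (hc : 0 < c) (hψ : 0 < ψ)
    (hmem : memD b x y)
    (hcrit : deriv (fun t => gFn a b c ψ t y) x = 0) :
    (ψ + x) * ((c + x - y) * (b + y - x)) = x * ((x - y) * (a + b + y - x)) := by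
  obtain ⟨hx, -, -, hyb, hyx, -⟩ := hmem
  have h₁ : 0 < ψ + x := by linarith
  have h₂ : 0 < c + x - y := by linarith
  have h₃ : 0 < x - y := by linarith
  have h₄ : 0 < a + b + y - x := by linarith
  have h₅ : 0 < b + y - x := by linarith
  rw [show deriv (fun t => gFn a b c ψ t y) x = _ from ((hasDerivAt_fFn h₁.ne' hx.ne').add
    (hasDerivAt_hFn_fst h₂.ne' h₃.ne' h₄.ne' h₅.ne')).deriv] at hcrit
  refine log_injOn_pos (mul_pos h₁ (mul_pos h₂ h₅)) (mul_pos hx (mul_pos h₃ h₄)) ?_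
  rw [log_mul h₁.ne' (mul_pos h₂ h₅).ne', log_mul h₂.ne' h₅.ne',
    log_mul hx.ne' (mul_pos h₃ h₄).ne', log_mul h₃.ne' h₄.ne']
  linarith

theorem memD.mul_eq_mul_of_deriv_snd_eq_zero (ha : 0 < a) (hc : 0 < c) (hmem : memD b x y)
    (hcrit : deriv (fun t => gFn a b c ψ x t) y = 0) :
    (1 - y) * ((1 + y) * ((x - y) * (a + b + y - x))) =
      (2 - y) * (y * ((c + x - y) * (b + y - x))) := by
  obtain ⟨-, hy, -, hyb, hyx, hy1⟩ := hmem
  have h₁ : 0 < 2 - y := by linarith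
  have h₂ : 0 < 1 - y := by linarith
  have h₃ : 0 < 1 + y := by linarith
  have h₄ : 0 < c + x - y := by linarith
  have h₅ : 0 < x - y := by linarith
  have h₆ : 0 < a + b + y - x := by linarith
  have h₇ : 0 < b + y - x := by linarith
  rw [show deriv (fun t => gFn a b c ψ x t) y = _ from ((hasDerivAt_hFn_snd h₁.ne' h₂.ne' h₃.ne'
    hy.ne' h₄.ne' h₅.ne' h₆.ne' h₇.ne').const_add (fFn ψ x)).deriv] at hcrit
  refine log_injOn_pos (mul_pos h₂ (mul_pos h₃ (mul_pos h₅ h₆)))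
    (mul_pos h₁ (mul_pos hy (mul_pos h₄ h₇))) ?_
  rw [log_mul h₂.ne' (mul_pos h₃ (mul_pos h₅ h₆)).ne', log_mul h₃.ne' (mul_pos h₅ h₆).ne',
    log_mul h₅.ne' h₆.ne', log_mul h₁.ne' (mul_pos hy (mul_pos h₄ h₇)).ne',
    log_mul hy.ne' (mul_pos h₄ h₇).ne', log_mul h₄.ne' h₇.ne']
  linarith

end CriticalPoint

section Algebra

variable {a b c ψ z φ ρ : ℝ}

theorem rho_quadratic_of_critical (hφ : φ ≠ 0) (hzφ : z * φ = ψ)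
    (hK : (c + φ - ρ) * (b + ρ - φ) ≠ 0)
    (E₁ : (ψ + φ) * ((c + φ - ρ) * (b + ρ - φ)) = φ * ((φ - ρ) * (a + b + ρ - φ)))
    (E₂ : (1 - ρ) * ((1 + ρ) * ((φ - ρ) * (a + b + ρ - φ))) =
      (2 - ρ) * (ρ * ((c + φ - ρ) * (b + ρ - φ)))) :
    z * ρ ^ 2 + 2 * ρ - 1 - z = 0 := by
  have key : φ * (z * ρ ^ 2 + 2 * ρ - 1 - z) * ((c + φ - ρ) * (b + ρ - φ)) = 0 := by
    linear_combination
      -(1 - ρ) * (1 + ρ) * E₁ - φ * E₂ + (ρ ^ 2 - 1) * ((c + φ - ρ) * (b + ρ - φ)) * hzφ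
  simpa [hφ, hK] using key

theorem gap_quadratic_of_critical (hφ : φ ≠ 0) (hzφ : z * φ = ψ)
    (E₁ : (ψ + φ) * ((c + φ - ρ) * (b + ρ - φ)) = φ * ((φ - ρ) * (a + b + ρ - φ))) :
    z * (φ - ρ) ^ 2 - ((b - c) * z - a - c) * (φ - ρ) - (1 + z) * b * c = 0 := by
  have key : φ * (z * (φ - ρ) ^ 2 - ((b - c) * z - a - c) * (φ - ρ) - (1 + z) * b * c) = 0 := by
    linear_combination -E₁ - ((c + φ - ρ) * (b + ρ - φ)) * hzφ
  simpa [hφ] using key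

theorem sqrt_eq_of_rho_quadratic (hz : 0 ≤ z) (hρ : 0 ≤ ρ) (h : z * ρ ^ 2 + 2 * ρ - 1 - z = 0) :
    √(z ^ 2 + z + 1) = z * ρ + 1 := by
  rw [show z ^ 2 + z + 1 = (z * ρ + 1) ^ 2 by linear_combination -z * h]
  exact sqrt_sq (by positivity)

theorem sqrt_discr_eq_of_gap_quadratic {u : ℝ} (hz : 0 ≤ z) (hb : 0 < b) (hc : 0 < c)
    (hu : 0 < u)
    (h : z * u ^ 2 - ((b - c) * z - a - c) * u - (1 + z) * b * c = 0) :
    √((z * b + z * c + a + c) ^ 2 - 4 * a * b * z) = 2 * z * u - ((b - c) * z - a - c) := by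
  have hpos : 0 < 2 * z * u - ((b - c) * z - a - c) := by
    have hprod : (2 * z * u - ((b - c) * z - a - c)) * u = z * u ^ 2 + (1 + z) * b * c := by
      linear_combination h
    exact pos_of_mul_pos_left (hprod ▸ by positivity) hu.le
  rw [show (z * b + z * c + a + c) ^ 2 - 4 * a * b * z =
      (2 * z * u - ((b - c) * z - a - c)) ^ 2 by linear_combination -4 * z * h]
  exact sqrt_sq hpos.le

end Algebra

theorem critical_point_identification_general (a b c ψ : ℝ) (ha : 0 < a) (hb : 0 < b) (hc : 0 < c)
    (hψ : 0 < ψ) (φ ρ : ℝ) (hmem : memD b φ ρ)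
    (hcx : deriv (fun t => gFn a b c ψ t ρ) φ = 0)
    (hcy : deriv (fun t => gFn a b c ψ φ t) ρ = 0) :
    zeta a b c (ψ / φ) = ψ ∧ ρ = sigmaFn (ψ / φ) ∧ φ = nuFn a b c (ψ / φ) := by
  have E₁ := hmem.mul_eq_mul_of_deriv_fst_eq_zero ha hc hψ hcx
  have E₂ := hmem.mul_eq_mul_of_deriv_snd_eq_zero ha hc hcy
  obtain ⟨hφ, hρ, -, hρb, hρφ, -⟩ := hmem
  set z := ψ / φ
  have hz : 0 < z := div_pos hψ hφ
  have hzφ : z * φ = ψ := div_mul_cancel₀ ψ hφ.ne'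
  have hK : (c + φ - ρ) * (b + ρ - φ) ≠ 0 := (mul_pos (by linarith) (by linarith)).ne'
  have hσ := sqrt_eq_of_rho_quadratic hz.le hρ.le (rho_quadratic_of_critical hφ.ne' hzφ hK E₁ E₂)
  have hζ : zeta a b c z = ψ := by
    rw [zeta, hσ, sqrt_discr_eq_of_gap_quadratic hz.le hb hc (sub_pos.2 hρφ)
      (gap_quadratic_of_critical hφ.ne' hzφ E₁), ← hzφ]
    ring
  refine ⟨hζ, ?_, ?_⟩
  · rw [sigmaFn, hσ, add_sub_cancel_right, mul_div_cancel_left₀ ρ hz.ne']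
  · rw [nuFn, hζ, ← hzφ, mul_div_cancel_left₀ φ hz.ne']

/-- If `(φ, ρ) ∈ 𝒟` is a critical point of `f + h`, then setting `z = ψ/φ` one has
`ζ(z) = ψ`, `ρ = σ(z)` and `φ = ν(z)`. -/
theorem critical_point_identification (a b c ψ : ℝ) (ha : 0 < a) (hb : 0 < b) (hc : 0 < c)
    (habc : a + b + c = 1) (hψ : 0 < ψ) (φ ρ : ℝ) (hmem : memD b φ ρ)
    (hcx : deriv (fun t => gFn a b c ψ t ρ) φ = 0)
    (hcy : deriv (fun t => gFn a b c ψ φ t) ρ = 0) :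
    zeta a b c (ψ / φ) = ψ ∧ ρ = sigmaFn (ψ / φ) ∧ φ = nuFn a b c (ψ / φ) :=
  critical_point_identification_general a b c ψ ha hb hc hψ φ ρ hmem hcx hcy
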